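/- Let X ⊆ {0,1}^ω with 0^ω ∉ X. Then for every x ∈ ({0,1} ∪ {◁_n : 0 < n < ω})^ω, x ∈ X^{≈∞} if and only if f_∞(x) ∈ X; that is, X^{≈∞} = f_∞^{-1}(X). In particular, if X is Borel then X^{≈∞} is Borel. -/

import Mathlib

open Set MeasureTheory

/-! ### Discrete topology on `Option` (the alphabet `A ∪ {◁}`) -/

instance optionTopology (A : Type*) : TopologicalSpace (Option A) := ⊥
instance optionDiscrete (A : Type*) : DiscreteTopology (Option A) := ⟨rfl⟩

/-! ### Finite-word eraser evaluation -/

/-- One step of the left-to-right backspace evaluation; the accumulator holds the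
(reversed) surviving word, `none` meaning the evaluation is undefined. -/
def eraseStep {B : Type*} [DecidableEq B] (e : B) (acc : Option (List B)) (a : B) :
    Option (List B) :=
  acc.bind fun l =>
    if a = e then (match l with | [] => none | _ :: t => some t) else some (a :: l)

/-- `finErase e u` is `some (u^e)` if the evaluation of the eraser `e` in `u` is
defined, and `none` otherwise. -/
def finErase {B : Type*} [DecidableEq B] (e : B) (u : List B) : Option (List B) :=
  (u.foldl (eraseStep e) (some [])).map List.reverse

/-- The length-`n` prefix `x[n]` of an infinite word. -/
def pre {B : Type*} (x : ℕ → B) (n : ℕ) : List B := (List.range n).map x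

/-- The infinite word `y` is the limit of the sequence of words `s n`
(every finite prefix of `y` eventually stabilizes). -/
def LimitsTo {B : Type*} (s : ℕ → ℕ → B) (y : ℕ → B) : Prop :=
  ∀ k : ℕ, ∃ N : ℕ, ∀ p ≥ N, ∀ i < k, s p i = y i

/-- `ErasesTo e x y` expresses that `x^e` is defined, infinite and equal to `y`:
all prefix evaluations `(x[p])^e` are defined, and for every `k` the length-`k`
prefix of `(x[p])^e` is eventually the length-`k` prefix of `y`. -/
def ErasesTo {B : Type*} [DecidableEq B] (e : B) (x y : ℕ → B) : Prop :=
  (∀ n, (finErase e (pre x n)).isSome) ∧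
  ∀ k : ℕ, ∃ N : ℕ, ∀ p ≥ N, ∀ l, finErase e (pre x p) = some l → l.take k = pre y k

/-- `X^≈ ⊆ (A ∪ {◁})^ω`, the eraser symbol `◁` being coded by `none`. -/
def ApproxSet {A : Type*} [DecidableEq A] (X : Set (ℕ → A)) : Set (ℕ → Option A) :=
  {x | ∃ y : ℕ → A, ErasesTo (none : Option A) x (fun i => some (y i)) ∧ y ∈ X}

/-! ### Wadge reducibility -/

/-- `S ≤_W T` : `S` is the preimage of `T` under some continuous map. -/
def WadgeLE {X Y : Type*} [TopologicalSpace X] [TopologicalSpace Y]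
    (S : Set X) (T : Set Y) : Prop :=
  ∃ f : X → Y, Continuous f ∧ S = f ⁻¹' T

/-! ### The Borel hierarchy (finite levels and level `ω`) -/

/-- The class `Σ^0_n` for finite `n ≥ 1`: `Σ^0_1` is the class of open sets and,
for `ξ > 1`, `Σ^0_ξ` is the class of countable unions of sets each of which is the
complement of a `Σ^0_{ξ'}` set for some `1 ≤ ξ' < ξ`. -/
def SigmaFin (X : Type*) [TopologicalSpace X] : ℕ → Set (Set X)
  | 0 => ∅
  | 1 => {s | IsOpen s}
  | (n+2) => {s | ∃ (f : ℕ → Set X) (m : ℕ → Fin (n+2)),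
      (∀ k, 1 ≤ (m k : ℕ) ∧ (f k)ᶜ ∈ SigmaFin X (m k)) ∧ s = ⋃ k, f k}
  termination_by n => n
  decreasing_by exact (m k).isLt

/-- `Π^0_n` : complements of `Σ^0_n` sets. -/
def PiFin (X : Type*) [TopologicalSpace X] (n : ℕ) : Set (Set X) :=
  {s | sᶜ ∈ SigmaFin X n}

/-- `Δ^0_n`. -/
def DeltaFin (X : Type*) [TopologicalSpace X] (n : ℕ) : Set (Set X) :=
  SigmaFin X n ∩ PiFin X n

/-- `Σ^0_ω` : countable unions of sets each in some `Π^0_{ξ'}` with `1 ≤ ξ' < ω`. -/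
def SigmaOmega (X : Type*) [TopologicalSpace X] : Set (Set X) :=
  {s | ∃ (f : ℕ → Set X) (m : ℕ → ℕ),
      (∀ k, 1 ≤ m k ∧ f k ∈ PiFin X (m k)) ∧ s = ⋃ k, f k}

/-- `Π^0_ω` : complements of `Σ^0_ω` sets. -/
def PiOmega (X : Type*) [TopologicalSpace X] : Set (Set X) :=
  {s | sᶜ ∈ SigmaOmega X}

/-- `Δ^0_ω = Σ^0_ω ∩ Π^0_ω`. -/
def DeltaOmega (X : Type*) [TopologicalSpace X] : Set (Set X) :=
  SigmaOmega X ∩ PiOmega X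

/-- `S ⊆ A^ω` is `Π^0_n`-complete: it is `Π^0_n` and every `Π^0_n` subset of a space
of infinite words over a finite alphabet (with the discrete topology) Wadge-reduces
to it. -/
def PiFinComplete {A : Type*} [TopologicalSpace A] (n : ℕ) (S : Set (ℕ → A)) : Prop :=
  S ∈ PiFin (ℕ → A) n ∧
    ∀ (B : Type) [Fintype B] [TopologicalSpace B] [DiscreteTopology B],
      ∀ T : Set (ℕ → B), T ∈ PiFin (ℕ → B) n → WadgeLE T S
/-! ### The alphabet `{0,1} ∪ {◁_n : 0 < n < ω}` and iterated erasing -/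

/-- The alphabet `{0,1} ∪ {◁_n : 0 < n < ω}` : `Sum.inl b` is the binary letter `b`
(`false` for `0`, `true` for `1`) and `Sum.inr k` is the eraser `◁_{k+1}`. -/
abbrev Letter : Type := Bool ⊕ ℕ

/-- The binary letter `0` or `1` viewed in the extended alphabet. -/
def ltr (b : Bool) : Letter := Sum.inl b

/-- The eraser `◁_{k+1}`. -/
def er (k : ℕ) : Letter := Sum.inr k

/-- `X^{≈∞}` for `X ⊆ {0,1}^ω` : those `x` such that each successive eraser
evaluation `x_n = (((x^{◁_1})^{◁_2})^…)^{◁_n}` is defined and infinite, and the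
limit of the `x_n` is defined, infinite, and belongs to `X`. -/
def InfEraseSet (X : Set (ℕ → Bool)) : Set (ℕ → Letter) :=
  {x | ∃ s : ℕ → (ℕ → Letter),
        s 0 = x ∧ (∀ n : ℕ, ErasesTo (er n) (s n) (s (n + 1))) ∧
        ∃ y : ℕ → Bool, y ∈ X ∧ LimitsTo s (fun i => ltr (y i))}

open Classical in
/-- `f(x) = x^◁` if `x^◁` is defined and infinite, and `f(x) = 0^ω` otherwise
(the eraser `◁` is coded by `none`, and `z` plays the role of the letter `0`). -/
noncomputable def eraseFun {A : Type*} [DecidableEq A] (z : A) (x : ℕ → Option A) :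
    ℕ → A :=
  if h : ∃ y : ℕ → A, ErasesTo (none : Option A) x (fun i => some (y i)) then h.choose
  else fun _ => z

open Classical in
/-- `f_{k+1}(x) = x^{◁_{k+1}}` if this is defined and infinite, `0^ω` otherwise. -/
noncomputable def fStep (k : ℕ) (x : ℕ → Letter) : ℕ → Letter :=
  if h : ∃ y : ℕ → Letter, ErasesTo (er k) x y then h.choose else fun _ => ltr false

/-- `fFun 0 = id` and `fFun (k+1) = f_{k+1}`. -/
noncomputable def fFun : ℕ → (ℕ → Letter) → (ℕ → Letter)
  | 0 => id
  | (k+1) => fStep k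

/-- `fIter n = f_n ∘ … ∘ f_1` (with `fIter 0 = id`). -/
noncomputable def fIter : ℕ → (ℕ → Letter) → (ℕ → Letter)
  | 0 => id
  | (n+1) => fun x => fStep n (fIter n x)

open Classical in
/-- `f_∞(x) = lim_{n<ω} (f_n ∘ … ∘ f_1)(x)` if this limit is defined and infinite
(and over `{0,1}`), and `f_∞(x) = 0^ω` otherwise. -/
noncomputable def fInf (x : ℕ → Letter) : ℕ → Bool :=
  if h : ∃ y : ℕ → Bool, LimitsTo (fun n => fIter n x) (fun i => ltr (y i)) then h.choose
  else fun _ => false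

/-- The set of infinite binary words containing infinitely many `1`s. -/
def InfManyOnes : Set (ℕ → Bool) := {y | {i | y i = true}.Infinite}
/-! ### The languages `L_n`, `L_∞`, `W`, and `ω`-powers -/

/-- Successive evaluation of the erasers `◁_1, …, ◁_n` (coded by
`Sum.inr 0, …, Sum.inr (n-1)`) on a finite word over `{0,1,◁_1,…,◁_n}`;
`none` if some evaluation is undefined. -/
def eraseChain (n : ℕ) (u : List (Bool ⊕ Fin n)) : Option (List (Bool ⊕ Fin n)) :=
  (List.finRange n).foldl (fun acc i => acc.bind (finErase (Sum.inr i))) (some u)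

/-- The language `L_n ⊆ {0,1,◁_1,…,◁_n}^*`: the words whose successive eraser
evaluations (first `◁_1`, then `◁_2`, …, then `◁_n`, each being defined) yield a
word in `0^*1`. -/
def Lword (n : ℕ) : Language (Bool ⊕ Fin n) :=
  {u | ∃ v, eraseChain n u = some v ∧
        ∃ k : ℕ, v = List.replicate k (Sum.inl false) ++ [Sum.inl true]}

/-- The eight-letter alphabet `{0, 1, α, B, C, D, E, β}`, coded as
`0, 1, 2, 3, 4, 5, 6, 7` respectively. -/
abbrev Gam : Type := Fin 8

/-- The code `α B^j C^j D^j E^j β` of the eraser `◁_j`. -/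
def eraserCode (j : ℕ) : List Gam :=
  (2 : Gam) :: (List.replicate j (3 : Gam) ++ List.replicate j (4 : Gam) ++
    List.replicate j (5 : Gam) ++ List.replicate j (6 : Gam) ++ [(7 : Gam)])

/-- Encoding of a letter of `{0,1,◁_1,…,◁_n}` over `{0, 1, α, B, C, D, E, β}` :
binary letters are kept, and `◁_j` is replaced by its code. -/
def encLetter {n : ℕ} : Bool ⊕ Fin n → List Gam
  | Sum.inl false => [(0 : Gam)]
  | Sum.inl true => [(1 : Gam)]
  | Sum.inr i => eraserCode ((i : ℕ) + 1)

/-- `L_∞ = ⋃_{n<ω} L_n`, with each eraser replaced by its code. -/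
def Linf : Language Gam :=
  {w | ∃ n : ℕ, ∃ u ∈ Lword n, w = (u.map encLetter).flatten}

/-- A wrong code: a word beginning with `α` and ending with `β` which is not of
the form `α B^j C^j D^j E^j β` for any `j ≥ 1`. -/
def IsWrongCode (v : List Gam) : Prop :=
  v.head? = some (2 : Gam) ∧ v.getLast? = some (7 : Gam) ∧ ¬ ∃ j ≥ 1, v = eraserCode j

/-- `W` : the finite words over `{0, 1, α, B, C, D, E, β}` containing (as a
subword, i.e. an infix) an occurrence of a wrong code. -/
def Wlang : Language Gam := {w | ∃ v, IsWrongCode v ∧ v <:+: w}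

/-- `l` is a prefix of the infinite word `x`. -/
def IsPrefixOfWord {A : Type*} (l : List A) (x : ℕ → A) : Prop :=
  l = (List.range l.length).map x

/-- The `ω`-power `V^ω = {u_1 u_2 … : ∀ n, u_n ∈ V \ {ε}}` of a language of
finite words. -/
def omegaPower {A : Type*} (V : Language A) : Set (ℕ → A) :=
  {x | ∃ u : ℕ → List A, (∀ n, u n ∈ V ∧ u n ≠ []) ∧
        ∀ n, IsPrefixOfWord (((List.range n).map u).flatten) x}

/-- The finite word `v` occurs in the infinite word `x` at position `i`. -/
def OccursAt {A : Type*} [Inhabited A] (v : List A) (x : ℕ → A) (i : ℕ) : Prop :=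
  ∀ j < v.length, x (i + j) = v.getD j default

/-- A wrong code occurs in `x` at position `i`. -/
def WrongAt (x : ℕ → Gam) (i : ℕ) : Prop := ∃ v, IsWrongCode v ∧ OccursAt v x i

/-- The concatenation `w · y` of a finite word and an infinite word. -/
def wordAppend {A : Type*} (w : List A) (y : ℕ → A) : ℕ → A :=
  fun i => if h : i < w.length then w.get ⟨i, h⟩ else y (i - w.length)

/-- `U · Z = {u y : u ∈ U, y ∈ Z}` for `U` a set of finite words and `Z` a set of
infinite words. -/
def concatSet {A : Type*} (U : Language A) (Z : Set (ℕ → A)) : Set (ℕ → A) :=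
  {x | ∃ u ∈ U, ∃ y ∈ Z, x = wordAppend u y}

/-- The language `V = L_∞ ∪ W`. -/
def Vlang : Language Gam := {w | w ∈ Linf ∨ w ∈ Wlang}

/-!
If `x ∈ X^{≈∞}` is witnessed by a chain `x = s 0, s 1, …`, then `fIter n x = s n` because
the result of an erasure is unique, so `f_∞(x)` is the limit of the chain. Conversely, if
`f_∞(x) ∈ X` then the iterates converge, and every erasure step is genuine: after an undefined
step the iterates are `0^ω` forever (`0^ω` contains no eraser), which would force
`f_∞(x) = 0^ω ∉ X`.

For Borelness, each `f_k` and then `f_∞` is, on a Borel set, the coordinatewise eventual value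
of maps each depending on finitely many coordinates (resp. of Borel maps), and constant off it.
-/

open Filter

instance Sum.instDiscreteMeasurableSpace {α β : Type*} [MeasurableSpace α] [MeasurableSpace β]
    [DiscreteMeasurableSpace α] [DiscreteMeasurableSpace β] :
    DiscreteMeasurableSpace (α ⊕ β) :=
  ⟨fun _ => measurableSet_sum_iff.2 ⟨.of_discrete, .of_discrete⟩⟩

section Words

variable {B : Type*}

lemma pre_eq_ofFn (x : ℕ → B) (p : ℕ) : pre x p = List.ofFn fun i : Fin p => x i :=
  List.ext_getElem (by simp [pre]) fun i _ _ => by simp [pre]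

lemma take_eq_pre_iff {l : List B} {y : ℕ → B} {k : ℕ} :
    l.take k = pre y k ↔ ∀ i < k, l[i]? = some (y i) := by
  simp only [List.ext_getElem?_iff, List.getElem?_take, pre, List.getElem?_map]
  refine ⟨fun h i hi => by simpa [hi] using h i, fun h i => ?_⟩
  by_cases hi : i < k <;> simp [hi, h]

lemma limitsTo_iff {s : ℕ → ℕ → B} {y : ℕ → B} :
    LimitsTo s y ↔ ∀ i, ∀ᶠ p in atTop, s p i = y i := by
  refine ⟨fun h i => eventually_atTop.2 ?_, fun h k => eventually_atTop.1 ?_⟩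
  · obtain ⟨N, hN⟩ := h (i + 1)
    exact ⟨N, fun p hp => hN p hp i i.lt_succ_self⟩
  · exact (Set.finite_lt_nat k).eventually_all.2 fun i _ => h i

lemma LimitsTo.unique {s : ℕ → ℕ → B} {y y' : ℕ → B} (h : LimitsTo s y)
    (h' : LimitsTo s y') : y = y' :=
  funext fun i => by
    obtain ⟨p, hp, hp'⟩ := ((limitsTo_iff.1 h i).and (limitsTo_iff.1 h' i)).exists
    exact hp.symm.trans hp'

variable [DecidableEq B]

def eraseLetter (e : B) (x : ℕ → B) (p j : ℕ) : Option B :=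
  (finErase e (pre x p)).bind fun l => l[j]?

lemma erasesTo_iff {e : B} {x y : ℕ → B} :
    ErasesTo e x y ↔ (∀ n, (finErase e (pre x n)).isSome) ∧
      LimitsTo (eraseLetter e x) (fun j => some (y j)) := by
  refine and_congr_right fun hdef => forall_congr' fun k => exists_congr fun N =>
    forall₂_congr fun p _ => ?_
  obtain ⟨l, hl⟩ := Option.isSome_iff_exists.1 (hdef p)
  simp [eraseLetter, hl, take_eq_pre_iff]

lemma ErasesTo.unique {e : B} {x y y' : ℕ → B} (h : ErasesTo e x y) (h' : ErasesTo e x y') :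
    y = y' :=
  funext fun i => Option.some_injective _ <|
    congrFun ((erasesTo_iff.1 h).2.unique (erasesTo_iff.1 h').2) i

lemma foldl_eraseStep_of_forall_ne {e : B} {u : List B} (hu : ∀ a ∈ u, a ≠ e) (l : List B) :
    u.foldl (eraseStep e) (some l) = some (u.reverse ++ l) := by
  induction u generalizing l with
  | nil => rfl
  | cons a t ih =>
    simp only [List.forall_mem_cons] at hu
    simp [eraseStep, hu.1, ih hu.2]

lemma erasesTo_self {e : B} {x : ℕ → B} (hx : ∀ i, x i ≠ e) : ErasesTo e x x := by
  have hfin (n : ℕ) : finErase e (pre x n) = some (pre x n) := by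
    simp [finErase, foldl_eraseStep_of_forall_ne (e := e) (u := pre x n) (by simp [pre, hx])]
  refine ⟨fun n => by simp [hfin], fun k => ⟨k, fun p hp l hl => ?_⟩⟩
  obtain rfl := Option.some_injective _ ((hfin p).symm.trans hl)
  simp [pre, ← List.map_take, List.take_range, hp]

end Words

section EventualLimits

variable {α β γ : Type*} [MeasurableSpace α] {s : ℕ → α → ℕ → γ}

lemma measurableSet_eventually_eq (hs : ∀ n j c, MeasurableSet {x | s n x j = c}) (j : ℕ)
    (c : γ) : MeasurableSet {x | ∀ᶠ n in atTop, s n x j = c} := by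
  convert MeasurableSet.measurableSet_liminf fun n => hs n j c using 1
  ext x
  exact (mem_liminf_iff_eventually_mem (s := fun n => {x | s n x j = c})).symm

lemma measurableSet_exists_limitsTo [Countable β] (φ : β → γ)
    (hs : ∀ n j c, MeasurableSet {x | s n x j = c}) :
    MeasurableSet {x | ∃ y : ℕ → β, LimitsTo (fun n => s n x) (fun i => φ (y i))} := by
  have : {x | ∃ y : ℕ → β, LimitsTo (fun n => s n x) (fun i => φ (y i))} =
      ⋂ j, ⋃ b, {x | ∀ᶠ n in atTop, s n x j = φ b} := by
    ext x
    simp only [limitsTo_iff, Set.mem_ofPred_eq, Set.mem_iInter, Set.mem_iUnion]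
    exact (Classical.skolem (p := fun j b => ∀ᶠ n in atTop, s n x j = φ b)).symm
  rw [this]
  exact .iInter fun j => .iUnion fun b => measurableSet_eventually_eq hs j (φ b)

lemma measurable_of_limitsTo [Countable β] [MeasurableSpace β] [MeasurableSingletonClass β]
    {F : α → ℕ → β} {φ : β → γ} (hφ : Function.Injective φ) {D : Set α}
    (hD : MeasurableSet D)
    (hs : ∀ n j c, MeasurableSet {x | s n x j = c})
    (hF : ∀ x ∈ D, LimitsTo (fun n => s n x) (fun i => φ (F x i))) {F₀ : ℕ → β}
    (hF₀ : ∀ x ∉ D, F x = F₀) : Measurable F := by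
  refine measurable_pi_iff.2 fun j => measurable_to_countable' fun b => ?_
  have : (fun x => F x j) ⁻¹' {b} =
      (D ∩ {x | ∀ᶠ n in atTop, s n x j = φ b}) ∪ (Dᶜ ∩ {_x | F₀ j = b}) := by
    ext x
    by_cases hx : x ∈ D
    · have hlim := limitsTo_iff.1 (hF x hx) j
      simp only [Set.mem_preimage, Set.mem_singleton_iff, Set.mem_union, Set.mem_inter_iff,
        hx, Set.mem_ofPred_eq, true_and, Set.mem_compl_iff, not_true_eq_false, false_and,
        or_false]
      refine ⟨fun h => h ▸ hlim, fun h => hφ ?_⟩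
      obtain ⟨n, hn, hn'⟩ := (hlim.and h).exists
      exact hn.symm.trans hn'
    · simp [hx, hF₀ x hx]
  rw [this]
  exact (hD.inter (measurableSet_eventually_eq hs j _)).union (hD.compl.inter (.const _))

end EventualLimits

lemma measurableSet_pre_mem {β : Type*} [MeasurableSpace β] [Countable β]
    [MeasurableSingletonClass β] (p : ℕ) (S : Set (List β)) :
    MeasurableSet {x : ℕ → β | pre x p ∈ S} := by
  have hS : MeasurableSet {v : Fin p → β | List.ofFn v ∈ S} := .of_discrete
  simp only [pre_eq_ofFn]
  exact hS.preimage (measurable_pi_lambda _ fun i => measurable_pi_apply (i : ℕ))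

lemma fStep_spec {k : ℕ} {x : ℕ → Letter} (h : ∃ y, ErasesTo (er k) x y) :
    ErasesTo (er k) x (fStep k x) := by
  rw [fStep, dif_pos h]
  exact h.choose_spec

lemma fStep_of_not_exists {k : ℕ} {x : ℕ → Letter} (h : ¬∃ y, ErasesTo (er k) x y) :
    fStep k x = fun _ => ltr false :=
  dif_neg h

lemma fStep_eq {k : ℕ} {x y : ℕ → Letter} (h : ErasesTo (er k) x y) : fStep k x = y :=
  (fStep_spec ⟨y, h⟩).unique h

lemma fInf_spec {x : ℕ → Letter}
    (h : ∃ y : ℕ → Bool, LimitsTo (fun n => fIter n x) (fun i => ltr (y i))) :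
    LimitsTo (fun n => fIter n x) (fun i => ltr (fInf x i)) := by
  rw [fInf, dif_pos h]
  exact h.choose_spec

lemma fInf_eq {x : ℕ → Letter} {y : ℕ → Bool}
    (h : LimitsTo (fun n => fIter n x) (fun i => ltr (y i))) : fInf x = y :=
  funext fun i => Sum.inl_injective (congrFun ((fInf_spec ⟨y, h⟩).unique h) i)

lemma fInf_of_not_exists {x : ℕ → Letter}
    (h : ¬∃ y : ℕ → Bool, LimitsTo (fun n => fIter n x) (fun i => ltr (y i))) :
    fInf x = fun _ => false :=
  dif_neg h

lemma fStep_zero (k : ℕ) : fStep k (fun _ => ltr false) = fun _ => ltr false :=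
  fStep_eq (erasesTo_self fun _ => Sum.inl_ne_inr)

lemma fIter_succ (n : ℕ) (x : ℕ → Letter) : fIter (n + 1) x = fStep n (fIter n x) := rfl

lemma fIter_eq_of_erasesTo {x : ℕ → Letter} {s : ℕ → ℕ → Letter} (h0 : s 0 = x)
    (hs : ∀ n, ErasesTo (er n) (s n) (s (n + 1))) (n : ℕ) : fIter n x = s n := by
  induction n with
  | zero => exact h0.symm
  | succ n ih => rw [fIter_succ, ih, fStep_eq (hs n)]

lemma fIter_eq_zero_of_le {x : ℕ → Letter} {n m : ℕ} (hn : fIter n x = fun _ => ltr false)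
    (hm : n ≤ m) : fIter m x = fun _ => ltr false := by
  induction m, hm using Nat.le_induction with
  | base => exact hn
  | succ m _ ih => rw [fIter_succ, ih, fStep_zero]

lemma mem_infEraseSet_iff {X : Set (ℕ → Bool)} (hX : (fun _ => false) ∉ X)
    (x : ℕ → Letter) :
    x ∈ InfEraseSet X ↔ fInf x ∈ X := by
  constructor
  · rintro ⟨s, h0, hs, y, hy, hlim⟩
    rw [← funext (fIter_eq_of_erasesTo h0 hs)] at hlim
    exact fInf_eq hlim ▸ hy
  · intro hx
    have hlim : ∃ y : ℕ → Bool, LimitsTo (fun n => fIter n x) (fun i => ltr (y i)) := by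
      by_contra h
      exact hX (fInf_of_not_exists h ▸ hx)
    have hstep (n : ℕ) : ∃ z, ErasesTo (er n) (fIter n x) z := by
      by_contra h
      have hzero : ∀ᶠ m in atTop, fIter m x = fun _ => ltr false :=
        eventually_atTop.2 ⟨n + 1, fun m => fIter_eq_zero_of_le (fStep_of_not_exists h)⟩
      exact hX (fInf_eq (limitsTo_iff.2 fun i => hzero.mono fun m hm => congrFun hm i) ▸ hx)
    exact ⟨fun n => fIter n x, rfl, fun n => fStep_spec (hstep n), fInf x, hx, fInf_spec hlim⟩

lemma measurable_fStep (k : ℕ) : Measurable (fStep k) := by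
  have hs (p j : ℕ) (c : Option Letter) : MeasurableSet {x | eraseLetter (er k) x p j = c} :=
    measurableSet_pre_mem p {u | (finErase (er k) u).bind (fun l => l[j]?) = c}
  have hD : MeasurableSet {x | ∃ y, ErasesTo (er k) x y} := by
    simp only [erasesTo_iff, exists_and_left, Set.ofPred_and, Set.ofPred_forall]
    exact (MeasurableSet.iInter fun n => measurableSet_pre_mem n {u | (finErase (er k) u).isSome})
      |>.inter (measurableSet_exists_limitsTo some hs)
  exact measurable_of_limitsTo (Option.some_injective _) hD hs
    (fun x hx => (erasesTo_iff.1 (fStep_spec hx)).2) fun x hx => fStep_of_not_exists hx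

lemma measurable_fIter (n : ℕ) : Measurable (fIter n) := by
  induction n with
  | zero => exact measurable_id
  | succ n ih => exact (measurable_fStep n).comp ih

lemma measurable_fInf : Measurable fInf := by
  have hs (n j : ℕ) (c : Letter) : MeasurableSet {x | fIter n x j = c} :=
    measurableSet_eq_fun ((measurable_pi_apply j).comp (measurable_fIter n)) measurable_const
  exact measurable_of_limitsTo Sum.inl_injective (measurableSet_exists_limitsTo ltr hs) hs
    (fun x hx => fInf_spec hx) fun x hx => fInf_of_not_exists hx

/-- For `X ⊆ {0,1}^ω` with `0^ω ∉ X` : `x ∈ X^{≈∞} ↔ f_∞(x) ∈ X`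
for all `x`, i.e. `X^{≈∞} = f_∞⁻¹(X)`; in particular if `X` is Borel then so is
`X^{≈∞}`. -/
theorem infEraseSet_eq_preimage (X : Set (ℕ → Bool)) (hX : (fun _ => false) ∉ X) :
    (∀ x : ℕ → Letter, x ∈ InfEraseSet X ↔ fInf x ∈ X) ∧
    InfEraseSet X = fInf ⁻¹' X ∧
    (MeasurableSet[borel (ℕ → Bool)] X →
      MeasurableSet[borel (ℕ → Letter)] (InfEraseSet X)) := by
  have hpre : InfEraseSet X = fInf ⁻¹' X := Set.ext (mem_infEraseSet_iff hX)
  refine ⟨mem_infEraseSet_iff hX, hpre, fun hXm => ?_⟩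
  rw [← BorelSpace.measurable_eq] at hXm ⊢
  exact hpre ▸ measurable_fInf hXm
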